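/- There exists a function d : ℕ → ℕ such that for every r ≥ 1, every finite subgroup of GL_r(ℤ) has order at most d(r), and moreover d is monotone: d(n) ≤ d(n+1) for all n (witnessed by the block-diagonal embedding GL_n(ℤ) ↪ GL_{n+1}(ℤ)). -/

import Mathlib

open Finset

/-!
If `A = 1 + M` has prime order `q` and `p ^ k` divides every entry of `M` (with `p` an odd prime,
`k ≥ 1`), then the binomial expansion of `(1 + M) ^ q = 1` shows that `p ^ (k + 1)` divides every
entry of `M`; hence `M = 0`. So the kernel of reduction `GL_r(ℤ) → GL_r(ℤ/3)` is torsion-free,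
reduction mod `3` is injective on every finite subgroup, and `|H| ≤ 3 ^ (r * r)`.
-/

theorem one_add_pow_eq_one_add_nsmul_add_sum {S : Type*} [Ring S] (x : S) (q : ℕ) :
    (1 + x) ^ q = 1 + q • x + ∑ j ∈ Ico 2 (q + 1), q.choose j • x ^ j := by
  rcases q.eq_zero_or_pos with rfl | hq
  · simp
  rw [add_comm, (Commute.one_right x).add_pow, range_eq_Ico,
    sum_eq_sum_Ico_succ_bot (by omega), sum_eq_sum_Ico_succ_bot (by omega)]
  simp [add_assoc, nsmul_eq_mul, Nat.cast_comm]

namespace Matrix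

variable {n : Type*} [Fintype n] [DecidableEq n]

theorem pow_dvd_pow_apply {R : Type*} [CommSemiring R] {d : R} {M : Matrix n n R}
    (h : ∀ i j, d ∣ M i j) (m : ℕ) (i j : n) : d ^ m ∣ (M ^ m) i j := by
  induction m generalizing i j with
  | zero => simp
  | succ m ih =>
    rw [pow_succ d m, pow_succ M m, mul_apply]
    exact dvd_sum fun l _ => mul_dvd_mul (ih i l) (h l j)

variable {p q k : ℕ} {M : Matrix n n ℤ}

theorem natCast_mul_apply_eq_neg_sum_of_one_add_pow_eq_one (h : (1 + M) ^ q = 1) (i j : n) :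
    (q : ℤ) * M i j = -∑ m ∈ Ico 2 (q + 1), (q.choose m : ℤ) * (M ^ m) i j := by
  have hsum := one_add_pow_eq_one_add_nsmul_add_sum M q
  rw [h, add_assoc, left_eq_add] at hsum
  have := congrFun (congrFun hsum i) j
  simp only [add_apply, sum_apply, smul_apply, zero_apply] at this
  simp only [nsmul_eq_mul] at this
  exact eq_neg_of_add_eq_zero_left this

theorem pow_succ_dvd_of_one_add_pow_eq_one (hp : p.Prime) (hp2 : p ≠ 2) (hq : q.Prime)
    (hk : 0 < k) (hM : ∀ i j, (p : ℤ) ^ k ∣ M i j) (h : (1 + M) ^ q = 1) (i j : n) :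
    (p : ℤ) ^ (k + 1) ∣ M i j := by
  have hq_mul := natCast_mul_apply_eq_neg_sum_of_one_add_pow_eq_one h i j
  have hpow (e m : ℕ) (hm : e ≤ k * m) : (p : ℤ) ^ e ∣ (M ^ m) i j :=
    (pow_dvd_pow _ hm).trans (pow_mul (p : ℤ) k m ▸ pow_dvd_pow_apply hM m i j)
  rcases eq_or_ne q p with rfl | hqp
  · -- `p ∣ C(p, m)` for `1 < m < p`, and `p ^ (k + 2) ∣ M ^ p` because `p ≥ 3`.
    have hq3 : 3 ≤ q := by have := hq.two_le; omega
    have hterms : ∀ m ∈ Ico 2 (q + 1),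
        (q : ℤ) * q ^ (k + 1) ∣ (q.choose m : ℤ) * (M ^ m) i j := by
      intro m hm
      obtain ⟨hm2, hmq⟩ := mem_Ico.mp hm
      rcases (Nat.lt_succ_iff.mp hmq).lt_or_eq with hmq | rfl
      · exact mul_dvd_mul (Int.natCast_dvd_natCast.mpr (hp.dvd_choose_self (by omega) hmq))
          (hpow _ m (by nlinarith))
      · rw [Nat.choose_self, Nat.cast_one, one_mul, ← pow_succ']
        exact hpow _ m (by nlinarith)
    have : (q : ℤ) * q ^ (k + 1) ∣ q * M i j := by
      rw [hq_mul]
      exact (dvd_sum hterms).neg_right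
    exact (mul_dvd_mul_iff_left (by exact_mod_cast hq.ne_zero)).mp this
  · have : (p : ℤ) ^ (k + 1) ∣ q * M i j := by
      rw [hq_mul]
      exact (dvd_sum fun m hm => (hpow _ m (by nlinarith [(mem_Ico.mp hm).1])).mul_left _).neg_right
    refine (IsCoprime.pow_left ?_).dvd_of_dvd_mul_left this
    exact Nat.Coprime.isCoprime ((Nat.coprime_primes hp hq).mpr hqp.symm)

theorem eq_zero_of_one_add_pow_eq_one (hp : p.Prime) (hp2 : p ≠ 2) (hq : q.Prime)
    (hM : ∀ i j, (p : ℤ) ∣ M i j) (h : (1 + M) ^ q = 1) : M = 0 := by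
  have hdvd (k : ℕ) : ∀ i j, (p : ℤ) ^ (k + 1) ∣ M i j := by
    induction k with
    | zero => simpa using hM
    | succ k ih => exact pow_succ_dvd_of_one_add_pow_eq_one hp hp2 hq k.succ_pos ih h
  ext i j
  by_contra hne
  obtain ⟨k, hk⟩ := (Int.finiteMultiplicity_iff (a := p)).mpr ⟨hp.ne_one, hne⟩
  exact hk (hdvd k i j)

end Matrix

namespace Matrix.GeneralLinearGroup

variable {n : Type*} [Fintype n] [DecidableEq n] {p : ℕ}

theorem dvd_sub_one_apply_of_map_eq_one {A : GL n ℤ}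
    (h : map (Int.castRingHom (ZMod p)) A = 1) (i j : n) :
    (p : ℤ) ∣ ((A : Matrix n n ℤ) - 1) i j := by
  have h' : (Int.castRingHom (ZMod p)).mapMatrix ((A : Matrix n n ℤ) - 1) = 0 := by
    rw [map_sub, map_one, sub_eq_zero]
    exact congrArg Units.val h
  rw [← ZMod.intCast_zmod_eq_zero_iff_dvd]
  exact congrFun (congrFun h' i) j

theorem eq_one_of_pow_eq_one_of_map_eq_one (hp : p.Prime) (hp2 : p ≠ 2) {q : ℕ} (hq : q.Prime)
    {A : GL n ℤ} (hAq : A ^ q = 1) (h : map (Int.castRingHom (ZMod p)) A = 1) : A = 1 := by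
  have hA : (1 + ((A : Matrix n n ℤ) - 1)) ^ q = 1 := by
    rw [add_sub_cancel, ← Units.val_pow_eq_pow_val, hAq, Units.val_one]
  exact Units.ext <| sub_eq_zero.mp <|
    eq_zero_of_one_add_pow_eq_one hp hp2 hq (dvd_sub_one_apply_of_map_eq_one h) hA

theorem eq_one_of_isOfFinOrder_of_map_eq_one (hp : p.Prime) (hp2 : p ≠ 2) {A : GL n ℤ}
    (hA : IsOfFinOrder A) (h : map (Int.castRingHom (ZMod p)) A = 1) : A = 1 := by
  by_contra hA1
  obtain ⟨q, hq, hqA⟩ := Nat.exists_prime_and_dvd (mt orderOf_eq_one_iff.mp hA1)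
  set B := A ^ (orderOf A / q) with hB_def
  have hB : orderOf B = q := orderOf_pow_orderOf_div hA.orderOf_pos.ne' hqA
  have hB1 : B = 1 := eq_one_of_pow_eq_one_of_map_eq_one hp hp2 hq
    (hB ▸ pow_orderOf_eq_one B) (by rw [hB_def, map_pow, h, one_pow])
  rw [hB1, orderOf_one] at hB
  exact hq.ne_one hB.symm

theorem injOn_map (hp : p.Prime) (hp2 : p ≠ 2) (H : Subgroup (GL n ℤ)) [Finite H] :
    Set.InjOn (map (Int.castRingHom (ZMod p))) (H : Set (GL n ℤ)) := by
  refine (Set.injOn_iff_map_eq_one _ H).mpr fun A hAH hA => ?_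
  exact eq_one_of_isOfFinOrder_of_map_eq_one hp hp2
    (H.subtype.isOfFinOrder (isOfFinOrder_of_finite (⟨A, hAH⟩ : H))) hA

end Matrix.GeneralLinearGroup

open Matrix.GeneralLinearGroup in
/-- Minkowski's theorem: there is a function `d : ℕ → ℕ` bounding the order of
every finite subgroup of `GL r ℤ`, and `d` can be taken monotone (witnessed by the
block-diagonal embedding `GL n ℤ ↪ GL (n+1) ℤ`). -/
theorem stmt3 :
    ∃ d : ℕ → ℕ,
      (∀ r : ℕ, 1 ≤ r → ∀ H : Subgroup (GL (Fin r) ℤ),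
        (H : Set (GL (Fin r) ℤ)).Finite → Nat.card H ≤ d r) ∧
      (∀ n : ℕ, d n ≤ d (n + 1)) := by
  refine ⟨fun r => 3 ^ (r * r), fun r _ H hH => ?_, fun n => ?_⟩
  · have : Finite H := hH.to_subtype
    calc Nat.card H ≤ Nat.card (GL (Fin r) (ZMod 3)) :=
          Nat.card_le_card_of_injective _ (injOn_map Nat.prime_three (by norm_num) H).injective
      _ ≤ Nat.card (Matrix (Fin r) (Fin r) (ZMod 3)) :=
          Nat.card_le_card_of_injective _ Units.val_injective
      _ = 3 ^ (r * r) := by simp [Matrix, pow_mul]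
  · exact Nat.pow_le_pow_right (by norm_num) (Nat.mul_le_mul n.le_succ n.le_succ)
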